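/- Let R be a TRS that is right-B-reduced (the right-hand side of every rule is a normal form with respect to →R/B), and let s be an R-reducible term that is minimal with respect to the strict encompassment order. If s →R⁺ · ∼B t, then the rule s → t is a right-B-equivalent variant of a rule in R, i.e., there exist ℓ → r ∈ R and a renaming σ with ℓσ = s and rσ ∼B t. -/

import Mathlib

/-- First-order terms over a signature `F` with natural-number variables. -/
inductive Tm (F : Type) : Type
  | var : Nat → Tm F
  | fn  : F → List (Tm F) → Tm F

namespace Tm

variable {F : Type}

mutual
def subst (σ : Nat → Tm F) : Tm F → Tm F
  | .var n => σ n
  | .fn f ts => .fn f (substList σ ts)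
def substList (σ : Nat → Tm F) : List (Tm F) → List (Tm F)
  | [] => []
  | t :: ts => subst σ t :: substList σ ts
end

mutual
def varsList : Tm F → List Nat
  | .var n => [n]
  | .fn _ ts => varsListL ts
def varsListL : List (Tm F) → List Nat
  | [] => []
  | t :: ts => varsList t ++ varsListL ts
end

/-- The set of variables of a term. -/
def vars (t : Tm F) : Set Nat := {n | n ∈ varsList t}

/-- A term is linear if no variable occurs more than once. -/
def Linear (t : Tm F) : Prop := (varsList t).Nodup

/-- The subterm at a given position (if the position exists). -/
def subtermAt : Tm F → List Nat → Option (Tm F)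
  | t, [] => some t
  | .var _, _ :: _ => none
  | .fn _ ts, i :: p =>
    match ts[i]? with
    | some u => subtermAt u p
    | none => none
  termination_by t p => p.length

/-- Replacement of the subterm at a given position. -/
def replaceAt : Tm F → List Nat → Tm F → Option (Tm F)
  | _, [], s => some s
  | .var _, _ :: _, _ => none
  | .fn f ts, i :: p, s =>
    match ts[i]? with
    | some u => (replaceAt u p s).map fun u' => .fn f (ts.set i u')
    | none => none
  termination_by t p _ => p.length

end Tm

open Tm

/-- A term rewrite system (or equational system): a set of pairs of terms. -/
abbrev TRS (F : Type) := Set (Tm F × Tm F)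

/-- Well-formedness of the rules: left-hand sides are not variables and
variables of right-hand sides occur on the left. -/
def IsTRS {F : Type} (R : TRS F) : Prop :=
  ∀ p ∈ R, (∀ n, p.1 ≠ .var n) ∧ vars p.2 ⊆ vars p.1

def LeftLinear {F : Type} (R : TRS F) : Prop := ∀ p ∈ R, Linear p.1

/-- One-step rewrite relation of a set of rules (closed under contexts and
substitutions). -/
def Rew {F : Type} (R : TRS F) (s t : Tm F) : Prop :=
  ∃ p l r σ, (l, r) ∈ R ∧ subtermAt s p = some (subst σ l) ∧
    replaceAt s p (subst σ r) = some t

/-- Normal forms. -/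
def NF {A : Type} (r : A → A → Prop) (a : A) : Prop := ∀ b, ¬ r a b

/-- The equational theory `∼B` generated by an ES `B`. -/
def simE {F : Type} (B : TRS F) : Tm F → Tm F → Prop :=
  Relation.EqvGen (Rew B)

/-- Rewriting modulo: `∼B · →R · ∼B`. -/
def RewMod {F : Type} (R B : TRS F) (s t : Tm F) : Prop :=
  ∃ s' t', simE B s s' ∧ Rew R s' t' ∧ simE B t' t

def Terminating {F : Type} (R : TRS F) : Prop :=
  WellFounded (fun a b => Rew R b a)

def TerminatingMod {F : Type} (R B : TRS F) : Prop :=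
  WellFounded (fun a b => RewMod R B b a)

/-- Conversion modulo `B`: arbitrary sequences of `→R`, `←R` and `∼B` steps. -/
def ConvMod {F : Type} (R B : TRS F) : Tm F → Tm F → Prop :=
  Relation.ReflTransGen (fun a b => Rew R a b ∨ Rew R b a ∨ simE B a b)

/-- Joinability modulo `B` using the plain rewrite relation:
`→R* · ∼B · ←R*`. -/
def JoinMod {F : Type} (R B : TRS F) (s t : Tm F) : Prop :=
  ∃ u v, Relation.ReflTransGen (Rew R) s u ∧ simE B u v ∧
    Relation.ReflTransGen (Rew R) t v

def ChurchRosserMod {F : Type} (R B : TRS F) : Prop :=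
  ∀ s t, ConvMod R B s t → JoinMod R B s t

def Joinable {F : Type} (R : TRS F) (s t : Tm F) : Prop :=
  ∃ v, Relation.ReflTransGen (Rew R) s v ∧ Relation.ReflTransGen (Rew R) t v

def Confluent {F : Type} (R : TRS F) : Prop :=
  ∀ s t u, Relation.ReflTransGen (Rew R) s t → Relation.ReflTransGen (Rew R) s u →
    Joinable R t u

/-- Renaming a term by a bijection on variables. -/
def rename {F : Type} (ρ : Nat ≃ Nat) (t : Tm F) : Tm F :=
  subst (fun n => .var (ρ n)) t

def VariantTm {F : Type} (s t : Tm F) : Prop := ∃ ρ : Nat ≃ Nat, rename ρ s = t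

def VariantRule {F : Type} (p q : Tm F × Tm F) : Prop :=
  ∃ ρ : Nat ≃ Nat, rename ρ p.1 = q.1 ∧ rename ρ p.2 = q.2

def Unifies {F : Type} (σ : Nat → Tm F) (s t : Tm F) : Prop := subst σ s = subst σ t

/-- Most general unifier. -/
def IsMGU {F : Type} (σ : Nat → Tm F) (s t : Tm F) : Prop :=
  Unifies σ s t ∧ ∀ τ, Unifies τ s t → ∃ δ, ∀ n, τ n = subst δ (σ n)

/-- `CriticalPeak R₁ R₂ t p s u` : `t ←R₁[p] s →R₂[ε] u` is a critical peak
obtained from an overlap of variable-disjoint variants of rules of `R₁`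
(inner rule) and `R₂` (root rule). -/
def CriticalPeak {F : Type} (R₁ R₂ : TRS F) (t : Tm F) (p : List Nat) (s u : Tm F) :
    Prop :=
  ∃ l₁ r₁ l₂ r₂ σ,
    (∃ q ∈ R₁, VariantRule q (l₁, r₁)) ∧
    (∃ q ∈ R₂, VariantRule q (l₂, r₂)) ∧
    (vars l₁ ∪ vars r₁) ∩ (vars l₂ ∪ vars r₂) = ∅ ∧
    (∃ f ts, subtermAt l₂ p = some (.fn f ts) ∧ IsMGU σ l₁ (.fn f ts)) ∧
    (p = [] → ¬ VariantRule (l₁, r₁) (l₂, r₂)) ∧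
    s = subst σ l₂ ∧
    replaceAt s p (subst σ r₁) = some t ∧
    u = subst σ r₂

/-- The set of critical pairs between `R₁` and `R₂`. -/
def CP {F : Type} (R₁ R₂ : TRS F) : Set (Tm F × Tm F) :=
  {tu | ∃ p s, CriticalPeak R₁ R₂ tu.1 p s tu.2}

/-- A critical peak `t ←[p] s →[ε] u` is prime (w.r.t. `R`) if all proper
subterms of `s|p` are in normal form w.r.t. `→R`. -/
def PrimeAt {F : Type} (R : TRS F) (s : Tm F) (p : List Nat) : Prop :=
  ∀ q v, q ≠ [] → subtermAt s (p ++ q) = some v → NF (Rew R) v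

/-- Prime critical pairs of a TRS. -/
def PCP {F : Type} (R : TRS F) : Set (Tm F × Tm F) :=
  {tu | ∃ p s, CriticalPeak R R tu.1 p s tu.2 ∧ PrimeAt R s p}

/-- `E ∪ E⁻¹`. -/
def sympm {F : Type} (E : TRS F) : TRS F :=
  E ∪ {q | ∃ p ∈ E, q = (p.2, p.1)}

/-- Prime critical pairs between `R` and `B^±` (in both directions), where
primality is always checked with respect to `→R`. -/
def PCPpm {F : Type} (R B : TRS F) : Set (Tm F × Tm F) :=
  {tu | ∃ p s, (CriticalPeak R (sympm B) tu.1 p s tu.2 ∨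
                CriticalPeak (sympm B) R tu.1 p s tu.2) ∧ PrimeAt R s p}

/-- `s` encompasses `t`: some subterm of `s` is an instance of `t`. -/
def Encompass {F : Type} (s t : Tm F) : Prop :=
  ∃ p w σ, subtermAt s p = some w ∧ w = subst σ t

/-- The strict part of encompassment: `⊳ = ⊵ ∖ ≐`. -/
def StrictEnc {F : Type} (s t : Tm F) : Prop :=
  Encompass s t ∧ ¬ VariantTm s t

/-- Two rules are right-`B`-equivalent variants. -/
def REV {F : Type} (B : TRS F) (p q : Tm F × Tm F) : Prop :=
  ∃ ρ : Nat ≃ Nat, rename ρ p.1 = q.1 ∧ simE B (rename ρ p.2) q.2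

/-- Left-reducedness: left-hand sides are irreducible by the other rules. -/
def LeftReduced {F : Type} (R : TRS F) : Prop :=
  ∀ p ∈ R, NF (Rew (R \ {p})) p.1

/-- Right-`B`-reducedness: right-hand sides are `→R/B`-normal forms. -/
def RightBReduced {F : Type} (R B : TRS F) : Prop :=
  ∀ p ∈ R, NF (RewMod R B) p.2

def CompleteMod {F : Type} (R B : TRS F) : Prop :=
  TerminatingMod R B ∧ ChurchRosserMod R B

def CanonicalMod {F : Type} (R B : TRS F) : Prop :=
  CompleteMod R B ∧ LeftReduced R ∧ RightBReduced R B

/-- Normalization equivalence modulo `B`: `→R^! · ∼B = →S^! · ∼B`. -/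
def NormEquivMod {F : Type} (R S B : TRS F) : Prop :=
  ∀ s t, (∃ u, Relation.ReflTransGen (Rew R) s u ∧ NF (Rew R) u ∧ simE B u t) ↔
         (∃ u, Relation.ReflTransGen (Rew S) s u ∧ NF (Rew S) u ∧ simE B u t)

/-- Conversion equivalence modulo `B`: `↔*_{R∪B} = ↔*_{S∪B}`. -/
def ConvEquivMod {F : Type} (R S B : TRS F) : Prop :=
  ∀ s t, Relation.EqvGen (fun a b => Rew R a b ∨ Rew B a b) s t ↔
         Relation.EqvGen (fun a b => Rew S a b ∨ Rew B a b) s t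

section Aux

variable {F : Type}

mutual
theorem subst_var : ∀ t : Tm F, subst (fun n => .var n) t = t
  | .var _ => rfl
  | .fn f ts => by rw [subst, substList_var ts]
theorem substList_var : ∀ ts : List (Tm F), substList (fun n => .var n) ts = ts
  | [] => rfl
  | t :: ts => by rw [substList, subst_var t, substList_var ts]
end

mutual
theorem subst_subst (θ σ : Nat → Tm F) : ∀ t : Tm F,
    subst θ (subst σ t) = subst (fun n => subst θ (σ n)) t
  | .var _ => rfl
  | .fn f ts => by rw [subst, subst, subst, substList_substList θ σ ts]
theorem substList_substList (θ σ : Nat → Tm F) : ∀ ts : List (Tm F),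
    substList θ (substList σ ts) = substList (fun n => subst θ (σ n)) ts
  | [] => rfl
  | t :: ts => by rw [substList, substList, substList, subst_subst θ σ t,
      substList_substList θ σ ts]
end

theorem substList_eq_map (σ : Nat → Tm F) : ∀ ts : List (Tm F),
    substList σ ts = ts.map (subst σ)
  | [] => rfl
  | t :: ts => by rw [substList, List.map_cons, substList_eq_map σ ts]

mutual
theorem subst_congr_vars (σ θ : Nat → Tm F) : ∀ t : Tm F,
    (∀ n ∈ varsList t, σ n = θ n) → subst σ t = subst θ t
  | .var m, h => h m (by simp [varsList])
  | .fn f ts, h => by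
      rw [subst, subst, substList_congr_vars σ θ ts (fun n hn => h n hn)]
theorem substList_congr_vars (σ θ : Nat → Tm F) : ∀ ts : List (Tm F),
    (∀ n ∈ varsListL ts, σ n = θ n) → substList σ ts = substList θ ts
  | [], _ => rfl
  | t :: ts, h => by
      rw [substList, substList,
        subst_congr_vars σ θ t (fun n hn => h n (by simp [varsListL, hn])),
        substList_congr_vars σ θ ts (fun n hn => h n (by simp [varsListL, hn]))]
end

mutual
theorem eq_vars_of_subst_eq (σ θ : Nat → Tm F) : ∀ t : Tm F,
    subst σ t = subst θ t → ∀ n ∈ varsList t, σ n = θ n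
  | .var m, h, n, hn => by
      simp [varsList] at hn; subst hn; exact h
  | .fn f ts, h, n, hn => by
      rw [subst, subst] at h
      exact eq_vars_of_substList_eq σ θ ts (by injection h) n hn
theorem eq_vars_of_substList_eq (σ θ : Nat → Tm F) : ∀ ts : List (Tm F),
    substList σ ts = substList θ ts → ∀ n ∈ varsListL ts, σ n = θ n
  | [], _, n, hn => by simp [varsListL] at hn
  | t :: ts, h, n, hn => by
      rw [substList, substList] at h
      simp [varsList, varsListL] at hn
      rcases hn with hn | hn
      · exact eq_vars_of_subst_eq σ θ t (by injection h) n hn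
      · exact eq_vars_of_substList_eq σ θ ts (by injection h) n hn
end

mutual
def size : Tm F → Nat
  | .var _ => 1
  | .fn _ ts => 1 + sizeList ts
def sizeList : List (Tm F) → Nat
  | [] => 0
  | t :: ts => size t + sizeList ts
end

theorem size_pos : ∀ t : Tm F, 1 ≤ size t
  | .var _ => le_refl _
  | .fn _ _ => by rw [size]; omega

mutual
theorem size_le_size_subst (σ : Nat → Tm F) : ∀ t : Tm F, size t ≤ size (subst σ t)
  | .var n => by rw [subst, size]; exact size_pos (σ n)
  | .fn f ts => by
      rw [subst, size, size]
      have := sizeList_le_sizeList_substList σ ts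
      omega
theorem sizeList_le_sizeList_substList (σ : Nat → Tm F) : ∀ ts : List (Tm F),
    sizeList ts ≤ sizeList (substList σ ts)
  | [] => le_refl _
  | t :: ts => by
      rw [substList, sizeList, sizeList]
      have := size_le_size_subst σ t
      have := sizeList_le_sizeList_substList σ ts
      omega
end

mutual
theorem size_rename (ρ : Nat ≃ Nat) : ∀ t : Tm F, size (rename ρ t) = size t
  | .var _ => rfl
  | .fn f ts => by
      rw [rename, subst, size, size, sizeList_rename ρ ts]
theorem sizeList_rename (ρ : Nat ≃ Nat) : ∀ ts : List (Tm F),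
    sizeList (substList (fun n => .var (ρ n)) ts) = sizeList ts
  | [] => rfl
  | t :: ts => by
      rw [substList, sizeList, sizeList, sizeList_rename ρ ts]
      have : size (subst (fun n => Tm.var (ρ n)) t) = size t := size_rename ρ t
      omega
end

theorem size_le_of_mem : ∀ (ts : List (Tm F)) (u : Tm F), u ∈ ts → size u ≤ sizeList ts
  | t :: ts, u, h => by
      rcases List.mem_cons.mp h with rfl | h
      · rw [sizeList]; omega
      · have := size_le_of_mem ts u h
        rw [sizeList]; omega

theorem size_le_of_subtermAt : ∀ (p : List Nat) (s w : Tm F),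
    subtermAt s p = some w → size w ≤ size s
  | [], s, w, h => by rw [subtermAt] at h; injection h with h; rw [h]
  | i :: q, .var n, w, h => by rw [subtermAt] at h; exact absurd h (by simp)
  | i :: q, .fn f ts, w, h => by
      rw [subtermAt] at h
      cases hts : ts[i]? with
      | none => rw [hts] at h; exact absurd h (by simp)
      | some u =>
        rw [hts] at h
        have h1 := size_le_of_subtermAt q u w h
        have h2 := size_le_of_mem ts u (List.mem_of_getElem? hts)
        rw [size]; omega

theorem size_lt_of_subtermAt_cons {i : Nat} {q : List Nat} {s w : Tm F}
    (h : subtermAt s (i :: q) = some w) : size w < size s := by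
  cases s with
  | var n => rw [subtermAt] at h; exact absurd h (by simp)
  | fn f ts =>
    rw [subtermAt] at h
    cases hts : ts[i]? with
    | none => rw [hts] at h; exact absurd h (by simp)
    | some u =>
      rw [hts] at h
      have h1 := size_le_of_subtermAt q u w h
      have h2 := size_le_of_mem ts u (List.mem_of_getElem? hts)
      have h3 := size_pos u
      rw [size]; omega

theorem subst_subtermAt (σ : Nat → Tm F) : ∀ (p : List Nat) (s w : Tm F),
    subtermAt s p = some w → subtermAt (subst σ s) p = some (subst σ w)
  | [], s, w, h => by
      rw [subtermAt] at h ⊢; injection h with h; rw [h]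
  | i :: q, .var n, w, h => by rw [subtermAt] at h; exact absurd h (by simp)
  | i :: q, .fn f ts, w, h => by
      rw [subtermAt] at h
      cases hts : ts[i]? with
      | none => rw [hts] at h; exact absurd h (by simp)
      | some u =>
        rw [hts] at h
        rw [subst, subtermAt, substList_eq_map, List.getElem?_map, hts]
        exact subst_subtermAt σ q u w h

theorem subst_replaceAt (σ : Nat → Tm F) : ∀ (p : List Nat) (s c b : Tm F),
    replaceAt s p c = some b → replaceAt (subst σ s) p (subst σ c) = some (subst σ b)
  | [], s, c, b, h => by
      rw [replaceAt] at h ⊢; injection h with h; rw [h]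
  | i :: q, .var n, c, b, h => by rw [replaceAt] at h; exact absurd h (by simp)
  | i :: q, .fn f ts, c, b, h => by
      rw [replaceAt] at h
      cases hts : ts[i]? with
      | none => rw [hts] at h; exact absurd h (by simp)
      | some u =>
        rw [hts] at h
        rcases Option.map_eq_some_iff.mp h with ⟨u', hu', rfl⟩
        have hmem : (substList σ ts)[i]? = some (subst σ u) := by
          rw [substList_eq_map, List.getElem?_map, hts]; rfl
        have hrec := subst_replaceAt σ q u c u' hu'
        rw [subst, replaceAt, hmem]
        show Option.map (fun u' => Tm.fn f ((substList σ ts).set i u'))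
            (replaceAt (subst σ u) q (subst σ c)) = some (subst σ (.fn f (ts.set i u')))
        rw [hrec, Option.map_some]
        rw [subst, substList_eq_map, substList_eq_map, List.map_set]

theorem Rew_subst {R : TRS F} (θ : Nat → Tm F) {a b : Tm F} (h : Rew R a b) :
    Rew R (subst θ a) (subst θ b) := by
  obtain ⟨p, l, r, σ, hlr, h1, h2⟩ := h
  refine ⟨p, l, r, fun n => subst θ (σ n), hlr, ?_, ?_⟩
  · have := subst_subtermAt θ p a _ h1
    rwa [subst_subst] at this
  · have := subst_replaceAt θ p a _ _ h2
    rwa [subst_subst] at this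

theorem rename_rename_symm (ρ : Nat ≃ Nat) (t : Tm F) :
    rename ρ.symm (rename ρ t) = t := by
  show subst _ (subst _ t) = t
  rw [subst_subst]
  have : (fun n => subst (fun n => Tm.var (ρ.symm n)) ((fun n => Tm.var (ρ n)) n))
      = fun n => (Tm.var n : Tm F) := by
    funext n; simp [subst]
  rw [this, subst_var]

end Aux

/-- If `R` is right-`B`-reduced and `s` is a minimal (w.r.t. strict
encompassment) `R`-reducible term with `s →R⁺ · ∼B t`, then `s → t` is a
right-`B`-equivalent variant of a rule of `R`. -/
theorem stmt9 {F : Type} (R B : TRS F) (hTRS : IsTRS R)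
    (hrr : RightBReduced R B) (s t : Tm F)
    (hred : ∃ u, Rew R s u)
    (hmin : ∀ u, StrictEnc s u → ¬ ∃ v, Rew R u v)
    (h : ∃ m, Relation.TransGen (Rew R) s m ∧ simE B m t) :
    ∃ l r, (l, r) ∈ R ∧ ∃ ρ : Nat ≃ Nat, rename ρ l = s ∧ simE B (rename ρ r) t := by
  obtain ⟨m, hsm, hmt⟩ := h
  obtain ⟨m₁, h1, hrest⟩ := Relation.TransGen.head'_iff.mp hsm
  obtain ⟨p, l, r, σ, hlr, hsub, hrep⟩ := h1
  -- `l` is itself `R`-reducible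
  have hlred : ∃ v, Rew R l v := by
    refine ⟨r, [], l, r, fun n => .var n, hlr, ?_, ?_⟩
    · rw [subtermAt, subst_var]
    · rw [replaceAt, subst_var]
  -- `s` encompasses `l`, hence by minimality `s` is a variant of `l`
  have henc : Encompass s l := ⟨p, subst σ l, σ, hsub, rfl⟩
  have hvar : VariantTm s l := by
    by_contra hv
    exact hmin l ⟨henc, hv⟩ hlred
  obtain ⟨ρ, hρ⟩ := hvar
  have hls : rename ρ.symm l = s := by rw [← hρ, rename_rename_symm]
  -- the rewrite step must be at the root
  have hp : p = [] := by
    cases p with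
    | nil => rfl
    | cons i q =>
      have h1 := size_lt_of_subtermAt_cons hsub
      have h2 := size_le_size_subst σ l
      have h3 : size s = size l := by rw [← hls, size_rename]
      omega
  subst hp
  have hsl : s = subst σ l := by rw [subtermAt] at hsub; injection hsub
  have hm₁ : subst σ r = m₁ := by rw [replaceAt] at hrep; injection hrep
  -- σ agrees with the renaming on the variables of l, hence on those of r
  have hpoint : ∀ n ∈ varsList l, σ n = .var (ρ.symm n) := by
    apply eq_vars_of_subst_eq
    rw [← hsl, ← hls]; rfl
  have hsub_r : subst σ r = rename ρ.symm r :=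
    subst_congr_vars _ _ r (fun n hn => hpoint n ((hTRS (l, r) hlr).2 hn))
  -- `rename ρ.symm r` is a normal form w.r.t. `→R`
  have hNFr : NF (Rew R) r := by
    intro v hv
    exact hrr (l, r) hlr v ⟨r, v, Relation.EqvGen.refl r, hv, Relation.EqvGen.refl v⟩
  have hNFm₁ : NF (Rew R) m₁ := by
    rw [← hm₁, hsub_r]
    intro v hv
    have h2 := Rew_subst (fun n => Tm.var (ρ n)) hv
    have h3 : subst (fun n => Tm.var (ρ n)) (rename ρ.symm r) = r := by
      have := rename_rename_symm ρ.symm r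
      rw [Equiv.symm_symm] at this; exact this
    rw [h3] at h2
    exact hNFr _ h2
  have hmm : m₁ = m := by
    rcases Relation.ReflTransGen.cases_head hrest with h | ⟨c, hc, _⟩
    · exact h
    · exact absurd hc (hNFm₁ c)
  refine ⟨l, r, hlr, ρ.symm, hls, ?_⟩
  rw [← hsub_r, hm₁, hmm]
  exact hmt
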